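/- arXiv:1610.03132 — 3 statements merged into one kernel-verified Lean document; each statement's English description precedes it below -/
import Mathlib

section
/- For all integers g ≥ 3, the sum ∑_{i=1}^{g} (log(2g-2i+2))^{8/5} is strictly greater than (2/π)·g·log(2g). -/
/-!
Bernoulli's inequality `y ^ (8/5) ≥ 1 + (8/5)(y - 1)` makes the sum at least
`(8/5) ∑ log(2g - 2i + 2) - (3/5) g`. Pairing the factor `2g - 2i + 2` with its reflection `2i`
gives `(2g - 2i + 2) · 2i ≥ 4g`, so the sum of logarithms is at least `(g/2) log(4g)`.
What remains, `(2/π) log(2g) < (4/5) log(4g) - 3/5`, holds as soon as `log(2g) ≥ log 2`,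
using only `π > 3` and `log 2 > 0.69`.
-/

open Real Finset

lemma Finset.sum_Icc_reflect {M : Type*} [AddCommMonoid M] (f : ℕ → M) (n : ℕ) :
    ∑ i ∈ Icc 1 n, f (n + 1 - i) = ∑ i ∈ Icc 1 n, f i :=
  sum_nbij' (fun i ↦ n + 1 - i) (fun i ↦ n + 1 - i) (by intro i; simp; omega)
    (by intro i; simp; omega) (by intro i; simp; omega) (by intro i; simp; omega) (fun _ _ ↦ rfl)

lemma Real.one_add_mul_sub_one_le_rpow {y p : ℝ} (hy : 0 ≤ y) (hp : 1 ≤ p) :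
    1 + p * (y - 1) ≤ y ^ p := by
  simpa using one_add_mul_self_le_rpow_one_add (s := y - 1) (by linarith) hp

lemma log_four_mul_le_log_add_log {n i : ℕ} (hi : i ∈ Icc 1 n) :
    log (4 * n) ≤ log (2 * (n : ℝ) - 2 * i + 2) + log (2 * i) := by
  obtain ⟨h1, hn⟩ : (1 : ℝ) ≤ i ∧ (i : ℝ) ≤ n := by
    simp only [mem_Icc] at hi; exact ⟨by exact_mod_cast hi.1, by exact_mod_cast hi.2⟩
  rw [← log_mul (by linarith) (by linarith)]
  exact log_le_log (by linarith) (by nlinarith)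

lemma mul_log_four_mul_le_two_mul_sum_log (n : ℕ) :
    n * log (4 * n) ≤ 2 * ∑ i ∈ Icc 1 n, log (2 * (n : ℝ) - 2 * i + 2) := by
  have hreflect : ∑ i ∈ Icc 1 n, log (2 * (n : ℝ) - 2 * i + 2) =
      ∑ i ∈ Icc 1 n, log (2 * (i : ℝ)) := by
    rw [← sum_Icc_reflect]
    refine sum_congr rfl fun i hi ↦ ?_
    rw [Nat.cast_sub (by simp only [mem_Icc] at hi; omega)]
    push_cast; ring_nf
  calc (n : ℝ) * log (4 * n) = ∑ i ∈ Icc 1 n, log (4 * n) := by simp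
    _ ≤ ∑ i ∈ Icc 1 n, (log (2 * (n : ℝ) - 2 * i + 2) + log (2 * i)) :=
      sum_le_sum fun i hi ↦ log_four_mul_le_log_add_log hi
    _ = 2 * ∑ i ∈ Icc 1 n, log (2 * (n : ℝ) - 2 * i + 2) := by
      rw [sum_add_distrib, ← hreflect]; ring

lemma two_div_pi_mul_lt_of_log_two_le {L : ℝ} (hL : log 2 ≤ L) :
    2 / π * L < 4 / 5 * (log 2 + L) - 3 / 5 := by
  have hpi : 2 / π < 2 / 3 := div_lt_div_of_pos_left two_pos three_pos pi_gt_three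
  have hlog2 := log_two_gt_d9
  nlinarith

theorem sum_log_rpow_gt (g : ℕ) (hg : 3 ≤ g) :
    (2 / Real.pi) * g * Real.log (2 * g) <
      ∑ i ∈ Finset.Icc 1 g, (Real.log (2 * (g : ℝ) - 2 * i + 2)) ^ ((8 : ℝ) / 5) := by
  have hg1 : (1 : ℝ) ≤ g := by exact_mod_cast (by omega : 1 ≤ g)
  have hlog4 : log (4 * g) = log 2 + log (2 * g) := by
    rw [← log_mul two_ne_zero (by positivity)]; ring_nf
  calc 2 / π * g * log (2 * g) = g * (2 / π * log (2 * g)) := by ring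
    _ < g * (4 / 5 * (log 2 + log (2 * g)) - 3 / 5) :=
      mul_lt_mul_of_pos_left
        (two_div_pi_mul_lt_of_log_two_le (log_le_log two_pos (by linarith))) (by linarith)
    _ ≤ 8 / 5 * ∑ i ∈ Icc 1 g, log (2 * (g : ℝ) - 2 * i + 2) - 3 / 5 * g := by
      linarith [hlog4 ▸ mul_log_four_mul_le_two_mul_sum_log g]
    _ = ∑ i ∈ Icc 1 g, (1 + 8 / 5 * (log (2 * (g : ℝ) - 2 * i + 2) - 1)) := by
      simp only [mul_sub, sum_add_distrib, sum_sub_distrib, ← mul_sum, sum_const, Nat.card_Icc,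
        add_tsub_cancel_right, nsmul_eq_mul, mul_one]
      ring
    _ ≤ ∑ i ∈ Icc 1 g, (log (2 * (g : ℝ) - 2 * i + 2)) ^ ((8 : ℝ) / 5) := by
      refine sum_le_sum fun i hi ↦ one_add_mul_sub_one_le_rpow (log_nonneg ?_) (by norm_num)
      have : (i : ℝ) ≤ g := by simp only [mem_Icc] at hi; exact_mod_cast hi.2
      linarith
end

section
/- In a right-angled hyperbolic hexagon with consecutive side lengths a, b, c, d, e, f (all positive reals) satisfying the standard hexagon relation sinh(e)·sinh(b/2) = cosh(a) [with b/2 the relevant half-side], one has e ≤ a + arcsinh(3/b). -/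
/-! The hexagon relation gives `sinh e = cosh a / sinh (b / 2) ≤ 2 cosh a / b`, while the addition
formula shows `sinh (a + arsinh t) ≥ t cosh a` for `a ≥ 0`; monotonicity of `sinh` concludes. -/

namespace Real

theorem div_sinh_le_div_self {c x : ℝ} (hc : 0 ≤ c) (hx : 0 < x) : c / sinh x ≤ c / x :=
  div_le_div_of_nonneg_left hc hx (self_le_sinh_iff.mpr hx.le)

theorem mul_cosh_le_sinh_add_arsinh {a : ℝ} (ha : 0 ≤ a) (t : ℝ) :
    t * cosh a ≤ sinh (a + arsinh t) := by
  have hsinh : 0 ≤ sinh a * cosh (arsinh t) :=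
    mul_nonneg (sinh_nonneg_iff.mpr ha) (cosh_pos _).le
  rw [sinh_add, sinh_arsinh]
  linarith

end Real

open Real

theorem hexagon_seam_bound_general (a b e : ℝ) (ha : 0 < a) (hb : 0 < b)
    (hhex : Real.sinh e * Real.sinh (b / 2) = Real.cosh a) :
    e ≤ a + Real.arsinh (3 / b) := by
  have hsinh_e : sinh e = cosh a / sinh (b / 2) := by
    rw [← hhex, mul_div_cancel_right₀ _ (sinh_pos_iff.mpr (half_pos hb)).ne']
  rw [← sinh_le_sinh]
  calc sinh e = cosh a / sinh (b / 2) := hsinh_e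
    _ ≤ cosh a / (b / 2) := div_sinh_le_div_self (cosh_pos a).le (half_pos hb)
    _ ≤ 3 / b * cosh a := by
      rw [div_div_eq_mul_div, div_mul_eq_mul_div, mul_comm]
      gcongr
      norm_num
    _ ≤ sinh (a + arsinh (3 / b)) := mul_cosh_le_sinh_add_arsinh ha.le _

theorem hexagon_seam_bound (a b e : ℝ) (ha : 0 < a) (hb : 0 < b) (he : 0 < e)
    (hhex : Real.sinh e * Real.sinh (b / 2) = Real.cosh a) :
    e ≤ a + Real.arsinh (3 / b) :=
  hexagon_seam_bound_general a b e ha hb hhex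
end

section
/- Let a, b, e > 0 be real numbers satisfying sinh(e)·sinh(b/2) = cosh(a). If additionally a·b ≥ κ·log(2g) for some κ > 1 and some real g ≥ 3, then a/e ≥ a/(a + arcsinh(1/b)), and this lower bound tends to 1 as κ → ∞ uniformly in a, b subject to the constraint. -/
/-!
Put `c = arsinh (1/b)`. If `a * b ≥ 1` then `c ≤ 1/b ≤ a`, so `sinh (a - c) ≥ 0` and
`sinh (a + c) = sinh (a - c) + 2 cosh a sinh c ≥ 2 cosh a / b ≥ cosh a / sinh (b/2) = sinh e`,
i.e. `e ≤ a + c`. Moreover `c ≤ 1/b` gives `a / (a + c) ≥ 1 - 1/(a b)`, and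
`a b ≥ κ log (2g) ≥ κ` because `2g ≥ 6 > exp 1`.
-/

open Real

lemma Real.arsinh_le_self {x : ℝ} (hx : 0 ≤ x) : arsinh x ≤ x := by
  conv_rhs => rw [← sinh_arsinh x]
  exact self_le_sinh_iff.mpr (arsinh_nonneg_iff.mpr hx)

lemma Real.two_mul_cosh_mul_sinh_le_sinh_add {a c : ℝ} (hca : c ≤ a) :
    2 * cosh a * sinh c ≤ sinh (a + c) := by
  have hsub : 0 ≤ sinh (a - c) := sinh_nonneg_iff.mpr (sub_nonneg.mpr hca)
  rw [sinh_sub] at hsub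
  rw [sinh_add]
  linarith

lemma le_add_arsinh_of_sinh_mul_sinh_eq_cosh {a b e : ℝ} (hb : 0 < b) (hab : 1 ≤ a * b)
    (h : sinh e * sinh (b / 2) = cosh a) : e ≤ a + arsinh (1 / b) := by
  have hinv : 1 / b ≤ a := by rwa [div_le_iff₀ hb]
  have hc : arsinh (1 / b) ≤ a := (arsinh_le_self (by positivity)).trans hinv
  have hsinh_half : b / 2 ≤ sinh (b / 2) := self_le_sinh_iff.mpr (by positivity)
  rw [← sinh_le_sinh]
  calc sinh e = cosh a / sinh (b / 2) := by
        rw [← h, mul_div_cancel_right₀ _ (sinh_pos_iff.mpr (by positivity)).ne']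
    _ ≤ cosh a / (b / 2) := div_le_div_of_nonneg_left (cosh_pos a).le (by positivity) hsinh_half
    _ = 2 * cosh a * sinh (arsinh (1 / b)) := by rw [sinh_arsinh]; field_simp
    _ ≤ sinh (a + arsinh (1 / b)) := two_mul_cosh_mul_sinh_le_sinh_add hc

lemma one_sub_inv_mul_le_div_add_arsinh {a b : ℝ} (ha : 0 < a) (hb : 0 < b) :
    1 - (a * b)⁻¹ ≤ a / (a + arsinh (1 / b)) := by
  have hc : 0 ≤ arsinh (1 / b) := arsinh_nonneg_iff.mpr (by positivity)
  have hcb : arsinh (1 / b) ≤ 1 / b := arsinh_le_self (by positivity)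
  have hsplit : a / (a + arsinh (1 / b)) = 1 - arsinh (1 / b) / (a + arsinh (1 / b)) := by
    field_simp; ring
  have hfrac : arsinh (1 / b) / (a + arsinh (1 / b)) ≤ (a * b)⁻¹ :=
    calc arsinh (1 / b) / (a + arsinh (1 / b)) ≤ arsinh (1 / b) / a :=
          div_le_div_of_nonneg_left hc ha (by linarith)
      _ ≤ 1 / b / a := by gcongr
      _ = (a * b)⁻¹ := by field_simp
  linarith

lemma le_of_mul_log_two_mul_le {κ g x : ℝ} (hκ : 0 ≤ κ) (hg : 3 ≤ g)
    (h : κ * log (2 * g) ≤ x) : κ ≤ x := by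
  have hlog : 1 ≤ log (2 * g) :=
    (le_log_iff_exp_le (by linarith)).mpr (by linarith [exp_one_lt_three])
  nlinarith

theorem hexagon_ratio_bound :
    (∀ (a b e κ g : ℝ), 0 < a → 0 < b → 0 < e →
      Real.sinh e * Real.sinh (b / 2) = Real.cosh a →
      1 < κ → 3 ≤ g → κ * Real.log (2 * g) ≤ a * b →
      a / (a + Real.arsinh (1 / b)) ≤ a / e) ∧
    (∀ ε : ℝ, 0 < ε → ∃ κ₀ : ℝ, ∀ κ : ℝ, κ₀ ≤ κ →
      ∀ (a b e g : ℝ), 0 < a → 0 < b → 0 < e →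
        Real.sinh e * Real.sinh (b / 2) = Real.cosh a →
        1 < κ → 3 ≤ g → κ * Real.log (2 * g) ≤ a * b →
        1 - ε ≤ a / (a + Real.arsinh (1 / b))) := by
  constructor
  · intro a b e κ g ha hb he h hκ hg hab
    have hκab : κ ≤ a * b := le_of_mul_log_two_mul_le (by linarith) hg hab
    exact div_le_div_of_nonneg_left ha.le he
      (le_add_arsinh_of_sinh_mul_sinh_eq_cosh hb (by linarith) h)
  · intro ε hε
    refine ⟨ε⁻¹, fun κ hκ₀ a b _ g ha hb _ _ hκ hg hab => ?_⟩
    have hκab : κ ≤ a * b := le_of_mul_log_two_mul_le (by linarith) hg hab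
    calc 1 - ε ≤ 1 - (a * b)⁻¹ := by
          gcongr
          calc (a * b)⁻¹ ≤ κ⁻¹ := inv_anti₀ (by linarith) hκab
            _ ≤ ε := inv_le_of_inv_le₀ hε hκ₀
      _ ≤ a / (a + arsinh (1 / b)) := one_sub_inv_mul_le_div_add_arsinh ha hb
end
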